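/- arXiv:1111.0515 — 2 statements merged into one kernel-verified Lean document; each statement's English description precedes it below -/
import Mathlib

section
/- Let q be a complex number which is neither 0 nor a root of unity, and let λ, x be complex numbers avoiding the singularities below. Define ψ₂(λ) = (q^{1+λ} - q^{-1-λ})/(q^{1-λ} - q^{λ-1}) and ψ(λ, x) = q^{(λ+1)x} + ψ₂(λ)·q^{(λ-1)x}. Define the difference operator D acting on functions of x by (Df)(x) = [(1 - q^{-2} q^{2x})/(q^{-1}(1 - q^{2x}))]·f(x+1) + [(1 - q^{-2} q^{-2x})/(q^{-1}(1 - q^{-2x}))]·f(x-1). Then D applied to ψ(λ, ·) at x equals (q^{λ} + q^{-λ})·ψ(λ, x), whenever q^{2x} ≠ 1 and q^{2λ-2} ≠ 1. -/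
/-!
With `Q` the additive character `z ↦ q^z`, the Baker–Akhiezer function factors as
`ψ(λ, z) = Q(λz) · (Q z + ψ₂ · (Q z)⁻¹)`. After cancelling `Q(λx)` the eigenvalue equation
becomes a rational identity in `t = Q 1`, `a = Q λ`, `X = Q x`, which holds exactly because
`ψ₂ · (t² - a²) = t²a² - 1`.
-/

theorem macdonald_eigen_identity {K : Type*} [Field K] {t a X B : K} (ht : t ≠ 0) (ha : a ≠ 0)
    (hX : X ≠ 0) (hX2 : X ^ 2 ≠ 1) (hB : B * (t ^ 2 - a ^ 2) = t ^ 2 * a ^ 2 - 1) :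
    (1 - (t ^ 2)⁻¹ * X ^ 2) / (t⁻¹ * (1 - X ^ 2)) * (a * (X * t + B * (X * t)⁻¹)) +
      (1 - (t ^ 2)⁻¹ * X⁻¹ ^ 2) / (t⁻¹ * (1 - X⁻¹ ^ 2)) * (a⁻¹ * (X * t⁻¹ + B * (X * t⁻¹)⁻¹)) =
      (a + a⁻¹) * (X + B * X⁻¹) := by
  have h1 : 1 - X ^ 2 ≠ 0 := sub_ne_zero.mpr (Ne.symm hX2)
  field_simp
  linear_combination (X ^ 2 - 1) * X ^ 2 * (1 - t ^ 2) * hB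

namespace AddChar

variable {R K : Type*} [CommRing R] [Field K] (Q : AddChar R K)

def macdonaldOp (f : R → K) (x : R) : K :=
  (1 - Q (-2) * Q (2 * x)) / (Q (-1) * (1 - Q (2 * x))) * f (x + 1) +
    (1 - Q (-2) * Q (-2 * x)) / (Q (-1) * (1 - Q (-2 * x))) * f (x - 1)

def bakerAkhiezerCoeff (l : R) : K := (Q (1 + l) - Q (-1 - l)) / (Q (1 - l) - Q (l - 1))

def bakerAkhiezer (l z : R) : K := Q ((l + 1) * z) + Q.bakerAkhiezerCoeff l * Q ((l - 1) * z)

theorem apply_ne_zero (a : R) : Q a ≠ 0 := (Q.val_isUnit a).ne_zero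

theorem map_two_mul (a : R) : Q (2 * a) = Q a ^ 2 := by
  rw [two_mul, map_add_eq_mul, sq]

theorem bakerAkhiezer_eq (l z : R) :
    Q.bakerAkhiezer l z = Q (l * z) * (Q z + Q.bakerAkhiezerCoeff l * (Q z)⁻¹) := by
  rw [bakerAkhiezer, add_one_mul, sub_one_mul, map_add_eq_mul, map_sub_eq_div]
  ring

theorem bakerAkhiezerCoeff_mul {l : R} (hl : Q (2 * l - 2) ≠ 1) :
    Q.bakerAkhiezerCoeff l * (Q 1 ^ 2 - Q l ^ 2) = Q 1 ^ 2 * Q l ^ 2 - 1 := by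
  have ht := Q.apply_ne_zero 1
  have ha := Q.apply_ne_zero l
  have hsq : Q 1 ^ 2 - Q l ^ 2 ≠ 0 := by
    rw [show 2 * l - 2 = 2 * l - 2 * 1 by ring, map_sub_eq_div, map_two_mul, map_two_mul,
      ne_eq, div_eq_one_iff_eq (pow_ne_zero 2 ht)] at hl
    exact sub_ne_zero.mpr (Ne.symm hl)
  rw [bakerAkhiezerCoeff, show -1 - l = -(1 + l) by ring]
  simp only [map_add_eq_mul, map_sub_eq_div, map_neg_eq_inv]
  field_simp

theorem macdonaldOp_bakerAkhiezer {l x : R} (hx : Q (2 * x) ≠ 1) (hl : Q (2 * l - 2) ≠ 1) :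
    Q.macdonaldOp (Q.bakerAkhiezer l) x = (Q l + Q (-l)) * Q.bakerAkhiezer l x := by
  have hcore := macdonald_eigen_identity (Q.apply_ne_zero 1) (Q.apply_ne_zero l)
    (Q.apply_ne_zero x) (by rwa [← map_two_mul]) (Q.bakerAkhiezerCoeff_mul hl)
  have htwo : Q 2 = Q 1 ^ 2 := by rw [← map_two_mul, mul_one]
  rw [macdonaldOp]
  simp only [bakerAkhiezer_eq, neg_mul, map_neg_eq_inv, map_two_mul, htwo, mul_add_one,
    mul_sub_one, map_add_eq_mul, map_sub_eq_div]
  linear_combination Q (l * x) * hcore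

end AddChar

noncomputable def Complex.expMulAddChar (c : ℂ) : AddChar ℂ ℂ where
  toFun z := Complex.exp (z * c)
  map_zero_eq_one' := by rw [zero_mul, Complex.exp_zero]
  map_add_eq_mul' a b := by rw [add_mul, Complex.exp_add]

theorem rank_one_macdonald_eigenvalue_general (q : ℂ) (lam x : ℂ)
    (hx : Complex.exp (2 * x * Complex.log q) ≠ 1)
    (hlam : Complex.exp ((2 * lam - 2) * Complex.log q) ≠ 1) :
    (fun Q : ℂ → ℂ => (fun ψ : ℂ → ℂ → ℂ =>
      (1 - Q (-2) * Q (2 * x)) / (Q (-1) * (1 - Q (2 * x))) * ψ lam (x + 1) +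
        (1 - Q (-2) * Q (-2 * x)) / (Q (-1) * (1 - Q (-2 * x))) * ψ lam (x - 1) =
      (Q lam + Q (-lam)) * ψ lam x)
      (fun l z => Q ((l + 1) * z) +
        ((Q (1 + l) - Q (-1 - l)) / (Q (1 - l) - Q (l - 1))) * Q ((l - 1) * z)))
      (fun z : ℂ => Complex.exp (z * Complex.log q)) :=
  (Complex.expMulAddChar (Complex.log q)).macdonaldOp_bakerAkhiezer hx hlam

/-- The rank-one Macdonald eigenvalue equation (case b, `R = A₁`, `m = 1`, `t = q⁻²`):
the operator
`(Df)(x) = [(1 - q⁻²q^{2x})/(q⁻¹(1 - q^{2x}))]·f(x+1) + [(1 - q⁻²q^{-2x})/(q⁻¹(1 - q^{-2x}))]·f(x-1)`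
applied to the Baker–Akhiezer function `ψ(λ,·)` gives `(q^λ + q^{-λ})·ψ(λ,x)`.
Here `q^z = exp(z·log q)`. -/
theorem rank_one_macdonald_eigenvalue (q : ℂ) (hq : q ≠ 0)
    (hroot : ∀ n : ℕ, 0 < n → q ^ n ≠ 1) (lam x : ℂ)
    (hx : Complex.exp (2 * x * Complex.log q) ≠ 1)
    (hlam : Complex.exp ((2 * lam - 2) * Complex.log q) ≠ 1) :
    (fun Q : ℂ → ℂ => (fun ψ : ℂ → ℂ → ℂ =>
      (1 - Q (-2) * Q (2 * x)) / (Q (-1) * (1 - Q (2 * x))) * ψ lam (x + 1) +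
        (1 - Q (-2) * Q (-2 * x)) / (Q (-1) * (1 - Q (-2 * x))) * ψ lam (x - 1) =
      (Q lam + Q (-lam)) * ψ lam x)
      (fun l z => Q ((l + 1) * z) +
        ((Q (1 + l) - Q (-1 - l)) / (Q (1 - l) - Q (l - 1))) * Q ((l - 1) * z)))
      (fun z : ℂ => Complex.exp (z * Complex.log q)) :=
  rank_one_macdonald_eigenvalue_general q lam x hx hlam
end

section
/- Let q be a complex number with 0 < |q| < 1 which is not a root of unity, m a positive integer, and let w(x) = Δ(x)Δ(-x) with Δ(x) = ∏_{j=1}^{m}(q^{x-j} - q^{j-x}). Let y ∈ ℂ satisfy q^{2y} = 1, and fix j ∈ {1,…,m}. Suppose f is holomorphic in a neighborhood of the points y+j and y-j and satisfies f(y + j) = f(y - j). Assume moreover that y±j are simple zeros of w. Then Res_{x = y+j} (f(x)/w(x)) + Res_{x = y-j} (f(x)/w(x)) = 0. -/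
/-!
Write `w(x) = Δ(x) Δ(-x)`. Since `q^{2y} = 1`, every factor of `Δ`, hence `Δ` itself, is
`2y`-periodic, so `w` is even and `2y`-periodic, i.e. `w(2y - x) = w(x)`. Differentiating this
reflection gives `w'(y + j) = -w'(y - j)`, and with `f(y + j) = f(y - j)` the two residues
`f(y ± j) / w'(y ± j)` cancel.
-/

open Complex Finset Function

theorem deriv_eq_neg_deriv_of_reflection {𝕜 F : Type*} [NontriviallyNormedField 𝕜]
    [NormedAddCommGroup F] [NormedSpace 𝕜 F] {g : 𝕜 → F} {a : 𝕜}
    (hg : ∀ x, g (a - x) = g x) (x : 𝕜) : deriv g x = -deriv g (a - x) := by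
  calc deriv g x = deriv (fun x ↦ g (a - x)) x := by rw [funext hg]
    _ = -deriv g (a - x) := deriv_comp_const_sub g a x

theorem div_deriv_add_div_deriv_eq_zero_of_reflection {𝕜 : Type*} [NontriviallyNormedField 𝕜]
    {f w : 𝕜 → 𝕜} {b b' : 𝕜} (hw : ∀ x, w (b + b' - x) = w x) (hf : f b = f b') :
    f b / deriv w b + f b' / deriv w b' = 0 := by
  rw [deriv_eq_neg_deriv_of_reflection hw b, add_sub_cancel_left, hf, div_neg, neg_add_cancel]

theorem Function.Periodic.mul_apply_neg_apply_sub {α R : Type*} [AddCommGroup α]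
    [CommMagma R] {f : α → R} {c : α} (hf : Periodic f c) (x : α) :
    f (c - x) * f (-(c - x)) = f x * f (-x) := by
  rw [hf.sub_eq', neg_sub, hf.sub_eq x, mul_comm]

noncomputable def qDelta (lq : ℂ) (m : ℕ) (x : ℂ) : ℂ :=
  ∏ i ∈ Icc 1 m, (exp ((x - i) * lq) - exp ((i - x) * lq))

theorem qDelta_neg (lq : ℂ) (m : ℕ) (x : ℂ) :
    qDelta lq m (-x) = ∏ i ∈ Icc 1 m, (exp ((-x - i) * lq) - exp ((i + x) * lq)) := by
  simp only [qDelta, sub_neg_eq_add]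

theorem qDelta_periodic {lq p : ℂ} (hp : exp (p * lq) = 1) (m : ℕ) :
    Periodic (qDelta lq m) p := by
  intro x
  refine prod_congr rfl fun i _ ↦ ?_
  rw [show (x + p - i) * lq = (x - i) * lq + p * lq by ring,
    show (i - (x + p)) * lq = (i - x) * lq - p * lq by ring, exp_add, exp_sub, hp, mul_one, div_one]

theorem rank_one_residue_cancellation_general (q : ℂ) (m : ℕ) (y : ℂ)
    (hy : Complex.exp (2 * y * Complex.log q) = 1)
    (j : ℕ) (f : ℂ → ℂ)
    (hfeq : f (y + j) = f (y - j)) :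
    (fun w : ℂ → ℂ =>
      w (y + j) = 0 → w (y - j) = 0 →
      deriv w (y + j) ≠ 0 → deriv w (y - j) ≠ 0 →
      f (y + j) / deriv w (y + j) + f (y - j) / deriv w (y - j) = 0)
      (fun x =>
        (∏ i ∈ Finset.Icc 1 m,
          (Complex.exp ((x - (i : ℂ)) * Complex.log q) -
            Complex.exp (((i : ℂ) - x) * Complex.log q))) *
        (∏ i ∈ Finset.Icc 1 m,
          (Complex.exp ((-x - (i : ℂ)) * Complex.log q) -
            Complex.exp (((i : ℂ) + x) * Complex.log q)))) := by
  simp only [← qDelta_neg, ← qDelta.eq_1]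
  intro _ _ _ _
  have hperiod : exp ((y + j + (y - j)) * log q) = 1 := by rw [← hy]; ring_nf
  exact div_deriv_add_div_deriv_eq_zero_of_reflection
    (qDelta_periodic hperiod m).mul_apply_neg_apply_sub hfeq

/-- Rank-one residue cancellation: let `w(x) = Δ(x)Δ(-x)` with
`Δ(x) = ∏_{j=1}^m (q^{x-j} - q^{j-x})` (`q^z = exp(z·log q)`, `0 < |q| < 1`, `q` not
a root of unity).  If `q^{2y} = 1`, `1 ≤ j ≤ m`, `f` is holomorphic near `y ± j` with
`f(y+j) = f(y-j)`, and `y ± j` are simple zeros of `w`, then the residues of `f/w`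
at `y + j` and `y - j` (namely `f(y±j)/w'(y±j)`) sum to zero. -/
theorem rank_one_residue_cancellation (q : ℂ) (hq0 : 0 < ‖q‖)
    (hq1 : ‖q‖ < 1) (hroot : ∀ n : ℕ, 0 < n → q ^ n ≠ 1)
    (m : ℕ) (hm : 0 < m) (y : ℂ)
    (hy : Complex.exp (2 * y * Complex.log q) = 1)
    (j : ℕ) (hj : j ∈ Finset.Icc 1 m) (f : ℂ → ℂ)
    (hf₁ : AnalyticAt ℂ f (y + j)) (hf₂ : AnalyticAt ℂ f (y - j))
    (hfeq : f (y + j) = f (y - j)) :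
    (fun w : ℂ → ℂ =>
      w (y + j) = 0 → w (y - j) = 0 →
      deriv w (y + j) ≠ 0 → deriv w (y - j) ≠ 0 →
      f (y + j) / deriv w (y + j) + f (y - j) / deriv w (y - j) = 0)
      (fun x =>
        (∏ i ∈ Finset.Icc 1 m,
          (Complex.exp ((x - (i : ℂ)) * Complex.log q) -
            Complex.exp (((i : ℂ) - x) * Complex.log q))) *
        (∏ i ∈ Finset.Icc 1 m,
          (Complex.exp ((-x - (i : ℂ)) * Complex.log q) -
            Complex.exp (((i : ℂ) + x) * Complex.log q)))) :=
  rank_one_residue_cancellation_general q m y hy j f hfeq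
end
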